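/- arXiv:1403.6982 — 2 statements merged into one kernel-verified Lean document; each statement's English description precedes it below -/
import Mathlib

section
/- Fix reals e > 0, c > d > 0, w0 > 0, w2 > 0 and λ > 0. Define u0(x) = (w0/(2·ln 2)) · e/(1 + e·x) − λ and u2(x) = (w2/(2·ln 2)) · (c/(1 + c·x) − d/(1 + d·x)) − λ, and for p0, p2 ≥ 0 define L2(p0, p2) = (w0/2)·log2((1 + e·(p0 + p2))/(1 + e·p2)) + (w2/2)·log2((1 + c·p2)/(1 + d·p2)) − λ·(p0 + p2). Then for all p0, p2 ≥ 0, L2(p0, p2) = ∫_{p2}^{p2 + p0} u0(x) dx + ∫_{0}^{p2} u2(x) dx, and consequently L2(p0, p2) ≤ ∫_{0}^{∞} max(max(u0(x), u2(x)), 0) dx, the latter integral being finite. -/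
/-!
Each `log (1 + k x)` in `L2` is the integral of its derivative `k / (1 + k x)`, so the first
claim is the fundamental theorem of calculus. For the bound, both `u0` and `u2` tend to
`-λ < 0`, so `g = max (max u0 u2) 0` is continuous on `[0, ∞)` and vanishes for large `x`,
hence integrable; `g` dominates `u0` on `[p2, p2 + p0]` and `u2` on `[0, p2]`, and being
nonnegative, its integral over `[0, p2 + p0]` is at most its integral over `(0, ∞)`.
-/

open MeasureTheory intervalIntegral Filter Topology Set

section DivOneAddMul

variable {k a b : ℝ}

lemma continuousOn_div_one_add_mul (hk : 0 ≤ k) :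
    ContinuousOn (fun x => k / (1 + k * x)) (Ici 0) :=
  continuousOn_const.div (by fun_prop) fun x (hx : 0 ≤ x) => by positivity

lemma intervalIntegrable_div_one_add_mul (hk : 0 ≤ k) (ha : 0 ≤ a) (hb : 0 ≤ b) :
    IntervalIntegrable (fun x => k / (1 + k * x)) volume a b :=
  ((continuousOn_div_one_add_mul hk).mono fun _ hx => (le_min ha hb).trans hx.1).intervalIntegrable

lemma integral_div_one_add_mul (hk : 0 ≤ k) (ha : 0 ≤ a) (hb : 0 ≤ b) :
    ∫ x in a..b, k / (1 + k * x) = Real.log (1 + k * b) - Real.log (1 + k * a) := by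
  refine integral_eq_sub_of_hasDerivAt (f := fun x => Real.log (1 + k * x)) (fun x hx => ?_)
    (intervalIntegrable_div_one_add_mul hk ha hb)
  have hx : 0 ≤ x := (le_min ha hb).trans hx.1
  simpa using (((hasDerivAt_id x).const_mul k).const_add 1).log (by positivity)

lemma tendsto_div_one_add_mul_atTop (hk : 0 ≤ k) :
    Tendsto (fun x => k / (1 + k * x)) atTop (𝓝 0) := by
  refine tendsto_of_tendsto_of_tendsto_of_le_of_le' tendsto_const_nhds tendsto_inv_atTop_zero
    ?_ ?_
  · filter_upwards [eventually_ge_atTop 0] with x hx using by positivity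
  · filter_upwards [eventually_gt_atTop 0] with x hx
    rw [div_le_iff₀ (by positivity), mul_add, mul_left_comm, inv_mul_cancel₀ hx.ne']
    linarith [inv_pos.2 hx]

end DivOneAddMul

lemma integral_const_mul_sub_const {f : ℝ → ℝ} {a b : ℝ}
    (hf : IntervalIntegrable f volume a b) (A l : ℝ) :
    ∫ x in a..b, (A * f x - l) = A * (∫ x in a..b, f x) - (b - a) * l := by
  rw [intervalIntegral.integral_sub (hf.const_mul A) intervalIntegrable_const,
    intervalIntegral.integral_const_mul, intervalIntegral.integral_const, smul_eq_mul]

lemma ContinuousOn.integrableOn_Ioi_of_eventuallyEq_zero {g : ℝ → ℝ} {a : ℝ}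
    (hg : ContinuousOn g (Ici a)) (hzero : g =ᶠ[atTop] 0) : IntegrableOn g (Ioi a) := by
  obtain ⟨T, hT⟩ := eventually_atTop.1 hzero
  have hhead : IntegrableOn g (Icc a T) := (hg.mono Icc_subset_Ici_self).integrableOn_Icc
  have htail : IntegrableOn g (Ici T) :=
    integrableOn_zero.congr_fun (fun x hx => (hT x hx).symm) measurableSet_Ici
  refine (hhead.union htail).mono_set fun x (hx : a < x) => ?_
  rcases le_total x T with hxT | hTx
  · exact Or.inl ⟨hx.le, hxT⟩
  · exact Or.inr hTx

lemma integral_add_adjacent_le_setIntegral_Ioi {f h g : ℝ → ℝ} {a b c : ℝ}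
    (hab : a ≤ b) (hbc : b ≤ c)
    (hf : IntervalIntegrable f volume a b) (hfg : ∀ x ∈ Icc a b, f x ≤ g x)
    (hh : IntervalIntegrable h volume b c) (hhg : ∀ x ∈ Icc b c, h x ≤ g x)
    (hg : IntegrableOn g (Ioi a)) (hg0 : 0 ≤ g) :
    (∫ x in a..b, f x) + ∫ x in b..c, h x ≤ ∫ x in Ioi a, g x := by
  have hgi : ∀ {s t}, a ≤ s → s ≤ t → IntervalIntegrable g volume s t := fun has hst =>
    (intervalIntegrable_iff_integrableOn_Ioc_of_le hst).2
      (hg.mono_set fun x hx => has.trans_lt hx.1)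
  calc (∫ x in a..b, f x) + ∫ x in b..c, h x
      ≤ (∫ x in a..b, g x) + ∫ x in b..c, g x :=
        add_le_add (integral_mono_on hab hf (hgi le_rfl hab) hfg)
          (integral_mono_on hbc hh (hgi hab hbc) hhg)
    _ = ∫ x in Ioc a c, g x := by
        rw [integral_add_adjacent_intervals (hgi le_rfl hab) (hgi hab hbc),
          integral_of_le (hab.trans hbc)]
    _ ≤ ∫ x in Ioi a, g x :=
        setIntegral_mono_set hg (ae_of_all _ fun x => hg0 x) Ioc_subset_Ioi_self.eventuallyLE

theorem L2_integral_repr_and_bound_general (e c d w0 w2 lam : ℝ) (he : 0 < e)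
    (hd : 0 < d) (hdc : d < c) (hlam : 0 < lam) :
    let u0 : ℝ → ℝ := fun x => w0 / (2 * Real.log 2) * (e / (1 + e * x)) - lam
    let u2 : ℝ → ℝ := fun x =>
      w2 / (2 * Real.log 2) * (c / (1 + c * x) - d / (1 + d * x)) - lam
    let L2 : ℝ → ℝ → ℝ := fun p0 p2 =>
      (w0 / 2) * Real.logb 2 ((1 + e * (p0 + p2)) / (1 + e * p2)) +
      (w2 / 2) * Real.logb 2 ((1 + c * p2) / (1 + d * p2)) - lam * (p0 + p2)
    (∀ p0 p2 : ℝ, 0 ≤ p0 → 0 ≤ p2 →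
      L2 p0 p2 = (∫ x in p2..(p2 + p0), u0 x) + ∫ x in (0:ℝ)..p2, u2 x) ∧
    (∀ p0 p2 : ℝ, 0 ≤ p0 → 0 ≤ p2 →
      L2 p0 p2 ≤ ∫ x in Set.Ioi (0:ℝ), max (max (u0 x) (u2 x)) 0) ∧
    IntegrableOn (fun x => max (max (u0 x) (u2 x)) 0) (Set.Ioi (0:ℝ)) := by
  intro u0 u2 L2
  have hc : 0 < c := hd.trans hdc
  have hu0i {a b : ℝ} (ha : 0 ≤ a) (hb : 0 ≤ b) : IntervalIntegrable u0 volume a b :=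
    ((intervalIntegrable_div_one_add_mul he.le ha hb).const_mul _).sub intervalIntegrable_const
  have hu2i {a b : ℝ} (ha : 0 ≤ a) (hb : 0 ≤ b) : IntervalIntegrable u2 volume a b :=
    (((intervalIntegrable_div_one_add_mul hc.le ha hb).sub
      (intervalIntegrable_div_one_add_mul hd.le ha hb)).const_mul _).sub intervalIntegrable_const
  have hrepr (p0 p2 : ℝ) (hp0 : 0 ≤ p0) (hp2 : 0 ≤ p2) :
      L2 p0 p2 = (∫ x in p2..(p2 + p0), u0 x) + ∫ x in (0:ℝ)..p2, u2 x := by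
    have hp : 0 ≤ p2 + p0 := by positivity
    simp only [u0, u2, L2]
    rw [integral_const_mul_sub_const (intervalIntegrable_div_one_add_mul he.le hp2 hp),
      integral_const_mul_sub_const (f := fun x => c / (1 + c * x) - d / (1 + d * x))
        ((intervalIntegrable_div_one_add_mul hc.le le_rfl hp2).sub
        (intervalIntegrable_div_one_add_mul hd.le le_rfl hp2))]
    rw [intervalIntegral.integral_sub (intervalIntegrable_div_one_add_mul hc.le le_rfl hp2)
        (intervalIntegrable_div_one_add_mul hd.le le_rfl hp2),
      integral_div_one_add_mul he.le hp2 hp, integral_div_one_add_mul hc.le le_rfl hp2,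
      integral_div_one_add_mul hd.le le_rfl hp2, Real.logb, Real.logb,
      Real.log_div (by positivity) (by positivity), Real.log_div (by positivity) (by positivity),
      add_comm p2 p0]
    simp only [mul_zero, add_zero, Real.log_one]
    field_simp
    ring
  set g : ℝ → ℝ := fun x => max (max (u0 x) (u2 x)) 0
  have hu0 : Tendsto u0 atTop (𝓝 (-lam)) := by
    simpa using ((tendsto_div_one_add_mul_atTop he.le).const_mul _).sub_const lam
  have hu2 : Tendsto u2 atTop (𝓝 (-lam)) := by
    simpa using (((tendsto_div_one_add_mul_atTop hc.le).sub
      (tendsto_div_one_add_mul_atTop hd.le)).const_mul _).sub_const lam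
  have hg_zero : g =ᶠ[atTop] 0 := by
    filter_upwards [hu0.eventually (gt_mem_nhds (neg_neg_of_pos hlam)),
      hu2.eventually (gt_mem_nhds (neg_neg_of_pos hlam))] with x h0 h2
    exact max_eq_right (max_le h0.le h2.le)
  have hg_cont : ContinuousOn g (Ici 0) :=
    (((continuousOn_const.mul (continuousOn_div_one_add_mul he.le)).sub continuousOn_const).sup
      ((continuousOn_const.mul ((continuousOn_div_one_add_mul hc.le).sub
        (continuousOn_div_one_add_mul hd.le))).sub continuousOn_const)).sup continuousOn_const
  have hg_int : IntegrableOn g (Ioi 0) := hg_cont.integrableOn_Ioi_of_eventuallyEq_zero hg_zero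
  refine ⟨hrepr, fun p0 p2 hp0 hp2 => ?_, hg_int⟩
  rw [hrepr p0 p2 hp0 hp2, add_comm]
  exact integral_add_adjacent_le_setIntegral_Ioi hp2 (le_add_of_nonneg_right hp0)
    (hu2i le_rfl hp2) (fun x _ => le_max_of_le_left (le_max_right _ _))
    (hu0i hp2 (by positivity)) (fun x _ => le_max_of_le_left (le_max_left _ _))
    hg_int fun x => le_max_right _ _

/-- Integral representation and upper bound for the per-sub-channel Lagrangian
`L2` (common message through the weaker user's gain `e`, superposed with the
second confidential message). -/
theorem L2_integral_repr_and_bound (e c d w0 w2 lam : ℝ) (he : 0 < e)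
    (hd : 0 < d) (hdc : d < c) (hw0 : 0 < w0) (hw2 : 0 < w2) (hlam : 0 < lam) :
    let u0 : ℝ → ℝ := fun x => w0 / (2 * Real.log 2) * (e / (1 + e * x)) - lam
    let u2 : ℝ → ℝ := fun x =>
      w2 / (2 * Real.log 2) * (c / (1 + c * x) - d / (1 + d * x)) - lam
    let L2 : ℝ → ℝ → ℝ := fun p0 p2 =>
      (w0 / 2) * Real.logb 2 ((1 + e * (p0 + p2)) / (1 + e * p2)) +
      (w2 / 2) * Real.logb 2 ((1 + c * p2) / (1 + d * p2)) - lam * (p0 + p2)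
    (∀ p0 p2 : ℝ, 0 ≤ p0 → 0 ≤ p2 →
      L2 p0 p2 = (∫ x in p2..(p2 + p0), u0 x) + ∫ x in (0:ℝ)..p2, u2 x) ∧
    (∀ p0 p2 : ℝ, 0 ≤ p0 → 0 ≤ p2 →
      L2 p0 p2 ≤ ∫ x in Set.Ioi (0:ℝ), max (max (u0 x) (u2 x)) 0) ∧
    IntegrableOn (fun x => max (max (u0 x) (u2 x)) 0) (Set.Ioi (0:ℝ)) :=
  L2_integral_repr_and_bound_general e c d w0 w2 lam he hd hdc hlam
end

section
/- Fix reals a > 0, b > 0, w0 > 0, λ > 0 and μ ∈ [0, 1]. Set k = w0/(2·λ·ln 2), A = 1/a, B = 1/b, D = (B − A − k)² + 4·k·μ·(B − A), and assume D ≥ 0; set ν = (1/2)·√D − (1/2)·(A + B − k) and assume ν ≥ 0. Then the function g(p) = (w0/2)·(μ·log2(1 + a·p) + (1 − μ)·log2(1 + b·p)) − λ·p satisfies g'(ν) = 0 and attains its global maximum over [0, ∞) at p = ν. -/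
/-!
Since `logb 2 = log / log 2`, `g = λ · (k · (μ log (1 + a p) + (1 - μ) log (1 + b p)) - p)`,
a positive multiple of a concave function on `[0, ∞)`. As `a / (1 + a p) = 1 / (A + p)`, its
derivative vanishes where `k (μ / (A + p) + (1 - μ) / (B + p)) = 1`, i.e. at the roots of
`p² + (A + B - k) p + A B - k (μ B + (1 - μ) A)`. The discriminant of this quadratic is `D`, and
`ν` is its larger root. A concave function attains its maximum where its derivative vanishes.
-/

open Real Set

lemma concaveOn_log_one_add_mul {a : ℝ} (ha : 0 ≤ a) :
    ConcaveOn ℝ (Ici 0) fun p => log (1 + a * p) := by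
  refine ⟨convex_Ici 0, fun x hx y hy s t hs ht hst => ?_⟩
  have hx' : 0 < 1 + a * x := add_pos_of_pos_of_nonneg one_pos (mul_nonneg ha hx)
  have hy' : 0 < 1 + a * y := add_pos_of_pos_of_nonneg one_pos (mul_nonneg ha hy)
  convert strictConcaveOn_log_Ioi.concaveOn.2 hx' hy' hs ht hst using 2
  simp only [smul_eq_mul]
  linear_combination (-1 : ℝ) * hst

lemma hasDerivAt_log_one_add_mul {a p : ℝ} (hp : 1 + a * p ≠ 0) :
    HasDerivAt (fun q => log (1 + a * q)) (a / (1 + a * p)) p := by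
  simpa using (((hasDerivAt_id p).const_mul a).const_add 1).log hp

lemma ConcaveOn.isMaxOn_of_hasDerivAt_eq_zero {s : Set ℝ} {f : ℝ → ℝ} {x : ℝ}
    (hf : ConcaveOn ℝ s f) (hx : x ∈ s) (hf' : HasDerivAt f 0 x) : IsMaxOn f s x := by
  intro y hy
  show f y ≤ f x
  rcases lt_trichotomy y x with hyx | rfl | hxy
  · have := hf.le_slope_of_hasDerivAt hy hx hyx hf'
    rw [slope_def_field, le_div_iff₀ (sub_pos.2 hyx)] at this
    linarith
  · exact le_rfl
  · have := hf.slope_le_of_hasDerivAt hx hy hxy hf'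
    rw [slope_def_field, div_le_iff₀ (sub_pos.2 hxy)] at this
    linarith

lemma quadratic_eq_zero_of_eq_root {A B k μ x : ℝ}
    (hD : 0 ≤ (B - A - k) ^ 2 + 4 * k * μ * (B - A))
    (hx : x = (1 / 2) * √((B - A - k) ^ 2 + 4 * k * μ * (B - A)) - (1 / 2) * (A + B - k)) :
    x * x + (A + B - k) * x + (A * B - k * (μ * B + (1 - μ) * A)) = 0 := by
  rw [← one_mul (x * x), quadratic_eq_zero_iff one_ne_zero _ x]
  · exact Or.inl (by rw [hx]; ring)
  · rw [mul_self_sqrt hD, discrim]; ring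

lemma marginal_eq_one_of_quadratic_eq_zero {A B k μ x : ℝ} (hA : 0 < A + x) (hB : 0 < B + x)
    (hx : x * x + (A + B - k) * x + (A * B - k * (μ * B + (1 - μ) * A)) = 0) :
    k * (μ / (A + x) + (1 - μ) / (B + x)) = 1 := by
  field_simp
  linear_combination -hx

/-- `ν` is the root of the marginal utility of the common-message power in the
μ-averaged problem (P3): the Lagrangian term `g` has derivative zero at `ν`
and attains its global maximum over `[0,∞)` there. -/
theorem nu_global_max (a b w0 lam μ : ℝ) (ha : 0 < a) (hb : 0 < b)
    (hw0 : 0 < w0) (hlam : 0 < lam) (hμ0 : 0 ≤ μ) (hμ1 : μ ≤ 1) :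
    let k : ℝ := w0 / (2 * lam * Real.log 2)
    let A : ℝ := 1 / a
    let B : ℝ := 1 / b
    let D : ℝ := (B - A - k) ^ 2 + 4 * k * μ * (B - A)
    let ν : ℝ := (1 / 2) * Real.sqrt D - (1 / 2) * (A + B - k)
    let g : ℝ → ℝ := fun p =>
      (w0 / 2) * (μ * Real.logb 2 (1 + a * p) + (1 - μ) * Real.logb 2 (1 + b * p)) -
        lam * p
    0 ≤ D → 0 ≤ ν → (deriv g ν = 0 ∧ ∀ p : ℝ, 0 ≤ p → g p ≤ g ν) := by
  intro k A B D ν g hD hν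
  have hg : g = fun p => lam * (k * (μ * log (1 + a * p) + (1 - μ) * log (1 + b * p)) - p) := by
    have := (log_pos one_lt_two).ne'
    funext p
    simp only [g, k, logb]
    field_simp
  have hfoc : k * (μ * (a / (1 + a * ν)) + (1 - μ) * (b / (1 + b * ν))) = 1 := by
    have hA : 0 < A + ν := by positivity
    have hB : 0 < B + ν := by positivity
    convert marginal_eq_one_of_quadratic_eq_zero hA hB (quadratic_eq_zero_of_eq_root hD rfl)
      using 3 <;> simp only [A, B] <;> field_simp
  have hderiv : HasDerivAt g 0 ν := by
    rw [hg]
    refine ((((hasDerivAt_log_one_add_mul (a := a) (p := ν) (by positivity)).const_mul μ).add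
      ((hasDerivAt_log_one_add_mul (a := b) (p := ν) (by positivity)).const_mul (1 - μ))).const_mul
      k |>.sub (hasDerivAt_id ν)).const_mul lam |>.congr_deriv ?_
    rw [hfoc, sub_self, mul_zero]
  have hconc : ConcaveOn ℝ (Ici 0) g := by
    have hk : 0 ≤ k := by have := log_pos one_lt_two; positivity
    rw [hg]
    exact ((((concaveOn_log_one_add_mul ha.le).smul hμ0).add
      ((concaveOn_log_one_add_mul hb.le).smul (sub_nonneg.2 hμ1))).smul hk |>.sub
      (convexOn_id (convex_Ici 0))).smul hlam.le
  exact ⟨hderiv.deriv, fun p hp => hconc.isMaxOn_of_hasDerivAt_eq_zero hν hderiv hp⟩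
end
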